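/- Let γ be a clan of signature (p,q), and let γ₀ be the clan consisting only of signs obtained from γ by replacing, for each pair (i,j) of γ, the entry in position i by + and the entry in position j by − (leaving all sign entries of γ unchanged). Then γ₀ is a clan of signature (p,q) with D(γ₀) = d_{p,q}, and γ can be obtained from γ₀ by a finite sequence of moves, each of which replaces a pair of opposite signs (in two positions i < j) by a pair of equal numbers in those same positions; consequently γ₀ lies below γ in the preorder on clans of signature (p,q) generated by this move. (γ₀ parametrizes a closed orbit contained in the closure of the orbit parametrized by γ.) -/

import Mathlib

/-- An entry of a clan: a plus sign, a minus sign, or a natural number. -/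
inductive CEntry : Type where
  | plus : CEntry
  | minus : CEntry
  | num : ℕ → CEntry
deriving DecidableEq

/-- Whether an entry is a natural number. -/
def CEntry.isNum : CEntry → Bool
  | .num _ => true
  | _ => false

/-- Whether an entry is a sign (`+` or `−`). -/
def CEntry.isSign : CEntry → Bool
  | .num _ => false
  | _ => true

/-- A clan of signature `(p, q)`: a sequence of `n = p + q` symbols, each `+`, `−`, or a
natural number, such that every natural number occurring in the sequence occurs exactly
twice, and the number of `+` entries plus the number of pairs of equal numbers is `p`. -/
structure Clan (n p q : ℕ) : Type where
  c : Fin n → CEntry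
  total : n = p + q
  twice : ∀ a : ℕ, (Finset.univ.filter fun i => c i = CEntry.num a).card = 0 ∨
      (Finset.univ.filter fun i => c i = CEntry.num a).card = 2
  signature : (Finset.univ.filter fun i => c i = CEntry.plus).card
      + (Finset.univ.filter fun i => (c i).isNum = true).card / 2 = p

namespace Clan

variable {n p q : ℕ}

/-- `(i, j)` is a pair of the clan `γ`: `i < j` and `c i = c j` is a natural number. -/
def IsPair (γ : Clan n p q) (i j : Fin n) : Prop :=
  i < j ∧ γ.c i = γ.c j ∧ (γ.c i).isNum = true

instance (γ : Clan n p q) (i j : Fin n) : Decidable (γ.IsPair i j) := by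
  unfold IsPair; infer_instance

/-- The finset of all pairs of the clan `γ`. -/
def pairs (γ : Clan n p q) : Finset (Fin n × Fin n) :=
  Finset.univ.filter fun x => γ.IsPair x.1 x.2

/-- The contribution `j − i − #{pairs (s,t) of γ with s < i < t < j}` of a pair `(i, j)`
to the dimension of the orbit parametrized by `γ`. -/
def summand (γ : Clan n p q) (x : Fin n × Fin n) : ℕ :=
  (x.2 : ℕ) - (x.1 : ℕ) -
    (γ.pairs.filter fun y => y.1 < x.1 ∧ x.1 < y.2 ∧ y.2 < x.2).card

/-- `d_{p,q} = (p(p−1) + q(q−1))/2`, the dimension of the closed orbits. -/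
def dpq (p q : ℕ) : ℕ := (p * (p - 1) + q * (q - 1)) / 2

/-- The dimension of the `GL_p × GL_q`-orbit on the flag variety parametrized by `γ`. -/
def D (γ : Clan n p q) : ℕ := dpq p q + ∑ x ∈ γ.pairs, γ.summand x

/-- `γ` includes the pattern `(1, +, −, 1)`. -/
def Includes1pm1 (γ : Clan n p q) : Prop :=
  ∃ i k l j : Fin n, i < k ∧ k < l ∧ l < j ∧
    γ.c k = CEntry.plus ∧ γ.c l = CEntry.minus ∧ γ.IsPair i j

/-- `γ` includes the pattern `(1, −, +, 1)`. -/
def Includes1mp1 (γ : Clan n p q) : Prop :=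
  ∃ i k l j : Fin n, i < k ∧ k < l ∧ l < j ∧
    γ.c k = CEntry.minus ∧ γ.c l = CEntry.plus ∧ γ.IsPair i j

/-- `γ` includes the pattern `(1, 2, 1, 2)`. -/
def Includes1212 (γ : Clan n p q) : Prop :=
  ∃ i s j t : Fin n, i < s ∧ s < j ∧ j < t ∧
    γ.IsPair i j ∧ γ.IsPair s t ∧ γ.c i ≠ γ.c s

/-- `γ` includes the pattern `(1, +, 2, 2, 1)`. -/
def Includes1p221 (γ : Clan n p q) : Prop :=
  ∃ i k s t j : Fin n, i < k ∧ k < s ∧ s < t ∧ t < j ∧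
    γ.c k = CEntry.plus ∧ γ.IsPair i j ∧ γ.IsPair s t ∧ γ.c i ≠ γ.c s

/-- `γ` includes the pattern `(1, −, 2, 2, 1)`. -/
def Includes1m221 (γ : Clan n p q) : Prop :=
  ∃ i k s t j : Fin n, i < k ∧ k < s ∧ s < t ∧ t < j ∧
    γ.c k = CEntry.minus ∧ γ.IsPair i j ∧ γ.IsPair s t ∧ γ.c i ≠ γ.c s

/-- `γ` includes the pattern `(1, 2, 2, +, 1)`. -/
def Includes122p1 (γ : Clan n p q) : Prop :=
  ∃ i s t k j : Fin n, i < s ∧ s < t ∧ t < k ∧ k < j ∧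
    γ.c k = CEntry.plus ∧ γ.IsPair i j ∧ γ.IsPair s t ∧ γ.c i ≠ γ.c s

/-- `γ` includes the pattern `(1, 2, 2, −, 1)`. -/
def Includes122m1 (γ : Clan n p q) : Prop :=
  ∃ i s t k j : Fin n, i < s ∧ s < t ∧ t < k ∧ k < j ∧
    γ.c k = CEntry.minus ∧ γ.IsPair i j ∧ γ.IsPair s t ∧ γ.c i ≠ γ.c s

/-- `γ` avoids the seven patterns `(1,+,−,1)`, `(1,−,+,1)`, `(1,2,1,2)`, `(1,+,2,2,1)`,
`(1,−,2,2,1)`, `(1,2,2,+,1)`, `(1,2,2,−,1)`. -/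
def AvoidsSeven (γ : Clan n p q) : Prop :=
  ¬ γ.Includes1pm1 ∧ ¬ γ.Includes1mp1 ∧ ¬ γ.Includes1212 ∧
    ¬ γ.Includes1p221 ∧ ¬ γ.Includes1m221 ∧ ¬ γ.Includes122p1 ∧ ¬ γ.Includes122m1

end Clan

/-- The move replacing a pair of opposite signs of `γ` in positions `i < j` by a pair of
equal numbers not occurring in `γ`, yielding `γ'`. -/
def ReplaceMove {n p q : ℕ} (γ γ' : Clan n p q) : Prop :=
  ∃ i j : Fin n, i < j ∧
    ((γ.c i = CEntry.plus ∧ γ.c j = CEntry.minus) ∨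
      (γ.c i = CEntry.minus ∧ γ.c j = CEntry.plus)) ∧
    (∃ a : ℕ, (∀ k, γ.c k ≠ CEntry.num a) ∧
      γ'.c i = CEntry.num a ∧ γ'.c j = CEntry.num a) ∧
    ∀ k, k ≠ i → k ≠ j → γ'.c k = γ.c k

/-!
Undoing a pair `(i, j)` of a clan, i.e. writing `+` at `i` and `−` at `j`, gives again a clan of
signature `(p, q)` (one `+` is gained and one pair lost), from which the original clan is
recovered by a single move. Undoing the pairs one at a time, by induction on the number of
numbered positions, ends at a clan of signs; it has no pairs, hence dimension `d_{p,q}`.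
-/

open Finset Function

namespace CEntry

theorem isNum_iff_exists_eq_num {e : CEntry} : e.isNum = true ↔ ∃ a, e = num a := by
  cases e <;> simp [isNum]

theorem isSign_eq_false_iff {e : CEntry} : e.isSign = false ↔ e.isNum = true := by
  cases e <;> simp [isSign, isNum]

end CEntry

namespace Clan

variable {n p q : ℕ}

section unpairEntries

variable {c : Fin n → CEntry} {i j k : Fin n}

variable (c i j) in
def unpairEntries : Fin n → CEntry := update (update c j .minus) i .plus

theorem unpairEntries_left : unpairEntries c i j i = .plus := update_self ..

theorem unpairEntries_right (hij : i ≠ j) : unpairEntries c i j j = .minus := by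
  simp [unpairEntries, hij.symm]

theorem unpairEntries_of_ne (hi : k ≠ i) (hj : k ≠ j) : unpairEntries c i j k = c k := by
  simp [unpairEntries, hi, hj]

theorem filter_unpairEntries_eq_num (hij : i ≠ j) (a : ℕ) :
    univ.filter (fun k => unpairEntries c i j k = .num a) =
      univ.filter (fun k => c k = .num a) \ {i, j} := by
  ext k
  by_cases hi : k = i
  · subst hi; simp [unpairEntries_left]
  by_cases hj : k = j
  · subst hj; simp [unpairEntries_right hij]
  simp [unpairEntries_of_ne hi hj, hi, hj]

theorem filter_unpairEntries_isNum (hij : i ≠ j) :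
    univ.filter (fun k => (unpairEntries c i j k).isNum = true) =
      univ.filter (fun k => (c k).isNum = true) \ {i, j} := by
  ext k
  simp only [mem_filter, mem_univ, true_and, mem_sdiff, mem_insert, mem_singleton]
  by_cases hi : k = i
  · subst hi; simp [unpairEntries_left, CEntry.isNum]
  by_cases hj : k = j
  · subst hj; simp [unpairEntries_right hij, CEntry.isNum]
  simp [unpairEntries_of_ne hi hj, hi, hj]

theorem filter_unpairEntries_eq_plus (hij : i ≠ j) (hj : c j ≠ .plus) :
    univ.filter (fun k => unpairEntries c i j k = .plus) =
      insert i (univ.filter fun k => c k = .plus) := by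
  ext k
  by_cases hi : k = i
  · subst hi; simp [unpairEntries_left]
  by_cases hj' : k = j
  · subst hj'; simp [unpairEntries_right hij, hi, hj]
  simp [unpairEntries_of_ne hi hj', hi]

end unpairEntries

variable (γ : Clan n p q) {i j k : Fin n}

def numPositions : Finset (Fin n) := univ.filter fun k => (γ.c k).isNum = true

theorem IsPair.ne {γ : Clan n p q} (h : γ.IsPair i j) : i ≠ j := h.1.ne

theorem filter_eq_num_eq_pair {a : ℕ} (h : γ.IsPair i j) (ha : γ.c i = .num a) :
    univ.filter (fun k => γ.c k = .num a) = {i, j} := by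
  have hsub : {i, j} ⊆ univ.filter (fun k => γ.c k = .num a) := by
    simp [insert_subset_iff, ha, ← h.2.1]
  refine (eq_of_subset_of_card_le hsub ?_).symm
  rcases γ.twice a with h0 | h2
  · simp [card_eq_zero.mp h0] at hsub
  · rw [h2, card_pair h.ne]

theorem pair_subset_numPositions (h : γ.IsPair i j) : {i, j} ⊆ γ.numPositions := by
  simp [insert_subset_iff, numPositions, h.2.2, ← h.2.1]

theorem exists_isPair_of_isNum (hk : (γ.c k).isNum = true) : ∃ i j, γ.IsPair i j := by
  obtain ⟨a, ha⟩ := CEntry.isNum_iff_exists_eq_num.mp hk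
  have hk_mem : k ∈ univ.filter (fun k => γ.c k = .num a) := by simp [ha]
  obtain ⟨x, y, hxy, hs⟩ := card_eq_two.mp <|
    (γ.twice a).resolve_left (card_ne_zero_of_mem hk_mem)
  have hmem : ∀ z ∈ ({x, y} : Finset (Fin n)), γ.c z = .num a := fun z hz => by
    rw [← hs] at hz; simpa using hz
  have hx := hmem x (by simp)
  have hy := hmem y (by simp)
  rcases hxy.lt_or_gt with hlt | hlt
  · exact ⟨x, y, hlt, hx.trans hy.symm, by simp [hx, CEntry.isNum]⟩
  · exact ⟨y, x, hlt, hy.trans hx.symm, by simp [hy, CEntry.isNum]⟩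

theorem D_eq_dpq_of_forall_isSign (h : ∀ k, (γ.c k).isSign = true) : γ.D = dpq p q := by
  have hpairs : γ.pairs = ∅ := filter_eq_empty_iff.mpr fun x _ hx => by
    simpa [CEntry.isSign_eq_false_iff.mpr hx.2.2] using h x.1
  simp [D, hpairs]

theorem IsPair.eq_or_eq_of_c_eq {γ : Clan n p q} (h : γ.IsPair i j) (hk : γ.c k = γ.c i) :
    k = i ∨ k = j := by
  obtain ⟨a, ha⟩ := CEntry.isNum_iff_exists_eq_num.mp h.2.2
  have hk_mem : k ∈ univ.filter (fun k => γ.c k = .num a) := by simp [hk, ha]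
  simpa [γ.filter_eq_num_eq_pair h ha] using hk_mem

theorem IsPair.unpairEntries_of_c_ne {γ : Clan n p q} (h : γ.IsPair i j) (hk : γ.c k ≠ γ.c i) :
    unpairEntries γ.c i j k = γ.c k :=
  unpairEntries_of_ne (by rintro rfl; exact hk rfl) (by rintro rfl; exact hk h.2.1.symm)

theorem card_filter_isNum_unpairEntries (h : γ.IsPair i j) :
    (univ.filter fun k => (unpairEntries γ.c i j k).isNum = true).card + 2 =
      γ.numPositions.card := by
  rw [filter_unpairEntries_isNum h.ne, ← card_pair h.ne]
  exact card_sdiff_add_card_eq_card (γ.pair_subset_numPositions h)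

def unpair (h : γ.IsPair i j) : Clan n p q where
  c := unpairEntries γ.c i j
  total := γ.total
  twice a := by
    rw [filter_unpairEntries_eq_num h.ne]
    by_cases ha : γ.c i = .num a
    · simp [γ.filter_eq_num_eq_pair h ha]
    · have hj : γ.c j ≠ .num a := h.2.1 ▸ ha
      rw [sdiff_eq_self_of_disjoint (by simp [ha, hj])]
      exact γ.twice a
  signature := by
    have hnum := γ.card_filter_isNum_unpairEntries h
    have hj : γ.c j ≠ .plus := fun hj => by
      have := h.2.2
      rw [h.2.1, hj] at this
      contradiction
    have hi : i ∉ univ.filter fun k => γ.c k = .plus := by simp [h.2.1, hj]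
    rw [filter_unpairEntries_eq_plus h.ne hj, card_insert_of_notMem hi]
    have := γ.signature
    simp only [numPositions] at hnum
    omega

variable {γ}

theorem card_numPositions_unpair_lt (h : γ.IsPair i j) :
    (γ.unpair h).numPositions.card < γ.numPositions.card := by
  have : (γ.unpair h).numPositions.card + 2 = γ.numPositions.card :=
    γ.card_filter_isNum_unpairEntries h
  omega

theorem unpair_c_left (h : γ.IsPair i j) : (γ.unpair h).c i = .plus := unpairEntries_left

theorem unpair_c_right (h : γ.IsPair i j) : (γ.unpair h).c j = .minus :=
  unpairEntries_right h.ne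

theorem unpair_c_of_isSign (h : γ.IsPair i j) (hk : (γ.c k).isSign = true) :
    (γ.unpair h).c k = γ.c k := by
  refine h.unpairEntries_of_c_ne fun hki => ?_
  simp [hki, CEntry.isSign_eq_false_iff.mpr h.2.2] at hk

theorem isPair_unpair (h : γ.IsPair i j) {s t : Fin n} (hst : γ.IsPair s t)
    (hne : (s, t) ≠ (i, j)) : (γ.unpair h).IsPair s t := by
  have hsi : γ.c s ≠ γ.c i := fun hsi => by
    rcases h.eq_or_eq_of_c_eq hsi with rfl | rfl <;>
      rcases h.eq_or_eq_of_c_eq (hst.2.1.symm.trans hsi) with rfl | rfl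
    all_goals first | exact hne rfl | exact absurd hst.1 (by simp [h.1.le])
  have hti : γ.c t ≠ γ.c i := hst.2.1 ▸ hsi
  have hs : (γ.unpair h).c s = γ.c s := h.unpairEntries_of_c_ne hsi
  have ht : (γ.unpair h).c t = γ.c t := h.unpairEntries_of_c_ne hti
  exact ⟨hst.1, by rw [hs, ht, hst.2.1], by rw [hs]; exact hst.2.2⟩

theorem replaceMove_unpair (h : γ.IsPair i j) : ReplaceMove (γ.unpair h) γ := by
  obtain ⟨a, ha⟩ := CEntry.isNum_iff_exists_eq_num.mp h.2.2
  refine ⟨i, j, h.1, .inl ⟨unpair_c_left h, unpair_c_right h⟩,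
    ⟨a, fun k => ?_, ha, h.2.1 ▸ ha⟩, fun k hi hj => (unpairEntries_of_ne hi hj).symm⟩
  by_cases hk : γ.c k = γ.c i
  · rcases h.eq_or_eq_of_c_eq hk with rfl | rfl
    · simp [unpair_c_left]
    · simp [unpair_c_right]
  · rw [← ha]
    exact (h.unpairEntries_of_c_ne hk).trans_ne hk

end Clan

/-- Replacing each pair `(i, j)` of `γ` by `+` in position `i` and `−` in
position `j` yields a clan `γ₀` of signature `(p, q)` consisting only of signs, with
`D(γ₀) = d_{p,q}`, from which `γ` is obtained by a finite sequence of moves each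
replacing a pair of opposite signs by a pair of equal numbers. -/
theorem closed_orbit_below {n p q : ℕ} (γ : Clan n p q) :
    ∃ γ₀ : Clan n p q,
      (∀ i j : Fin n, γ.IsPair i j → γ₀.c i = CEntry.plus ∧ γ₀.c j = CEntry.minus) ∧
      (∀ k : Fin n, (γ.c k).isSign = true → γ₀.c k = γ.c k) ∧
      γ₀.D = Clan.dpq p q ∧
      Relation.ReflTransGen ReplaceMove γ₀ γ := by
  induction hm : γ.numPositions.card using Nat.strong_induction_on generalizing γ with
  | _ m ih =>
  by_cases hsign : ∀ k, (γ.c k).isSign = true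
  · refine ⟨γ, fun i j h => ?_, fun _ _ => rfl, γ.D_eq_dpq_of_forall_isSign hsign, .refl⟩
    simpa [CEntry.isSign_eq_false_iff.mpr h.2.2] using hsign i
  obtain ⟨k₀, hk₀⟩ := not_forall.mp hsign
  obtain ⟨i, j, hij⟩ :=
    γ.exists_isPair_of_isNum (CEntry.isSign_eq_false_iff.mp (by simpa using hk₀))
  obtain ⟨γ₀, hpairs, hsigns, hD, hrel⟩ :=
    ih _ (hm ▸ Clan.card_numPositions_unpair_lt hij) (γ.unpair hij) rfl
  refine ⟨γ₀, fun s t hst => ?_, fun k hk => ?_, hD, hrel.tail (Clan.replaceMove_unpair hij)⟩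
  · by_cases hne : (s, t) = (i, j)
    · obtain ⟨rfl, rfl⟩ := Prod.mk.inj hne
      constructor
      · rw [hsigns s (by rw [Clan.unpair_c_left]; rfl), Clan.unpair_c_left]
      · rw [hsigns t (by rw [Clan.unpair_c_right]; rfl), Clan.unpair_c_right]
    · exact hpairs s t (Clan.isPair_unpair hij hst hne)
  · rw [hsigns k (by rwa [Clan.unpair_c_of_isSign hij hk]), Clan.unpair_c_of_isSign hij hk]
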